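/- Run HPMD with 1 + η_k·τ_k = 1/γ and η_k = γ^{−2(k+1)}, and assume |c(s,a)| ≤ C for all (s,a). Then the policy iterates converge: for every s ∈ S and a ∈ A, lim_{k→∞} π_k(a|s) = π*_U(a|s), where π*_U is the optimal policy of maximal entropy: π*_U(a|s) = 1/|A*(s)| if a ∈ A*(s) and π*_U(a|s) = 0 otherwise. -/

import Mathlib

open scoped Classical

/-- A probability distribution on a finite set: nonnegative and sums to 1. -/
def IsDist {A : Type*} [Fintype A] (p : A → ℝ) : Prop :=
  (∀ a, 0 ≤ p a) ∧ ∑ a, p a = 1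

/-- A (randomized, stationary) policy. -/
def IsPolicy {S A : Type*} [Fintype A] (π : S → A → ℝ) : Prop :=
  ∀ s, IsDist (π s)

/-- Kullback–Leibler divergence on a finite set (0·log 0 = 0). -/
noncomputable def KL {A : Type*} [Fintype A] (p q : A → ℝ) : ℝ :=
  ∑ a, p a * Real.log (p a / q a)

/-- The Q-function induced by a value function `V`. -/
noncomputable def Qf {S A : Type*} [Fintype S] (γ : ℝ) (c : S → A → ℝ)
    (P : S → A → S → ℝ) (V : S → ℝ) (s : S) (a : A) : ℝ :=
  c s a + γ * ∑ s', P s a s' * V s'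

/-- Minimal Q-value at a state. -/
noncomputable def Qmin {S A : Type*} [Fintype A] [Nonempty A] (Q : S → A → ℝ) (s : S) : ℝ :=
  Finset.univ.inf' Finset.univ_nonempty (Q s)

/-- The set of optimal actions at a state: A*(s) = argmin_a Q*(s,a). -/
noncomputable def Astar {S A : Type*} [Fintype A] [Nonempty A] (Q : S → A → ℝ) (s : S) :
    Finset A :=
  Finset.univ.filter (fun a => Q s a = Qmin Q s)

/-- The optimal policy of maximal entropy: uniform over A*(s). -/
noncomputable def piU {S A : Type*} [Fintype A] [Nonempty A] (Q : S → A → ℝ)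
    (s : S) (a : A) : ℝ :=
  if a ∈ Astar Q s then 1 / ((Astar Q s).card : ℝ) else 0

section Aux
variable {A : Type*} [Fintype A]

lemma sum_mul_le_of_dist {p f : A → ℝ} (hp : IsDist p) {M : ℝ} (h : ∀ a, f a ≤ M) :
    ∑ a, p a * f a ≤ M := by
  calc ∑ a, p a * f a ≤ ∑ a, p a * M := by
        apply Finset.sum_le_sum
        intro a _
        exact mul_le_mul_of_nonneg_left (h a) (hp.1 a)
    _ = M := by rw [← Finset.sum_mul, hp.2, one_mul]

lemma le_sum_mul_of_dist {p f : A → ℝ} (hp : IsDist p) {m : ℝ} (h : ∀ a, m ≤ f a) :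
    m ≤ ∑ a, p a * f a := by
  have := sum_mul_le_of_dist hp (f := fun a => -f a) (M := -m) (fun a => neg_le_neg (h a))
  simp only [mul_neg, Finset.sum_neg_distrib, neg_le_neg_iff] at this
  linarith [this]

lemma abs_sum_mul_le_of_dist {p f : A → ℝ} (hp : IsDist p) {M : ℝ} (h : ∀ a, |f a| ≤ M) :
    |∑ a, p a * f a| ≤ M := by
  rw [abs_le]
  constructor
  · exact le_sum_mul_of_dist hp (fun a => (abs_le.mp (h a)).1)
  · exact sum_mul_le_of_dist hp (fun a => (abs_le.mp (h a)).2)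

lemma dist_le_one {p : A → ℝ} (hp : IsDist p) (a : A) : p a ≤ 1 := by
  rw [← hp.2]
  exact Finset.single_le_sum (fun b _ => hp.1 b) (Finset.mem_univ a)

lemma KL_term_nonneg {p q : A → ℝ} (hp : IsDist p) (hq : IsDist q) (hqpos : ∀ a, 0 < q a)
    (a : A) : p a - q a ≤ p a * Real.log (p a / q a) := by
  rcases eq_or_lt_of_le (hp.1 a) with h | h
  · simp [← h]
    linarith [(hq.1 a)]
  · have hx : 0 < q a / p a := div_pos (hqpos a) h
    have := Real.log_le_sub_one_of_pos hx
    have hlog : Real.log (p a / q a) = - Real.log (q a / p a) := by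
      rw [← Real.log_inv, inv_div]
    rw [hlog]
    have h2 : q a / p a - 1 = (q a - p a) / p a := by field_simp
    nlinarith [this, mul_pos h (hqpos a), (div_mul_cancel₀ (q a - p a) (ne_of_gt h))]

lemma KL_nonneg {p q : A → ℝ} (hp : IsDist p) (hq : IsDist q) (hqpos : ∀ a, 0 < q a) :
    0 ≤ KL p q := by
  have : ∑ a, (p a - q a) ≤ KL p q :=
    Finset.sum_le_sum (fun a _ => KL_term_nonneg hp hq hqpos a)
  rw [Finset.sum_sub_distrib, hp.2, hq.2] at this
  linarith

lemma KL_self (q : A → ℝ) : KL q q = 0 := by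
  unfold KL
  apply Finset.sum_eq_zero
  intro a _
  rcases eq_or_ne (q a) 0 with h | h
  · simp [h]
  · simp [div_self h]

lemma KL_eq_of_le_zero {p q : A → ℝ} (hp : IsDist p) (hq : IsDist q) (hqpos : ∀ a, 0 < q a)
    (hKL : KL p q ≤ 0) : p = q := by
  have hterm : ∀ a ∈ Finset.univ, (0:ℝ) ≤ p a * Real.log (p a / q a) - (p a - q a) :=
    fun a _ => by linarith [KL_term_nonneg hp hq hqpos a]
  have hsum : ∑ a, (p a * Real.log (p a / q a) - (p a - q a)) ≤ 0 := by
    have : ∑ a, (p a * Real.log (p a / q a) - (p a - q a))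
        = KL p q - (∑ a, p a - ∑ a, q a) := by
      rw [Finset.sum_sub_distrib, Finset.sum_sub_distrib]; rfl
    rw [this, hp.2, hq.2]; linarith
  have hzero : ∀ a ∈ Finset.univ, p a * Real.log (p a / q a) - (p a - q a) = 0 := by
    intro a ha
    have h1 := Finset.sum_eq_zero_iff_of_nonneg hterm
    have h2 : ∑ a, (p a * Real.log (p a / q a) - (p a - q a)) = 0 :=
      le_antisymm hsum (Finset.sum_nonneg hterm)
    exact (h1.mp h2) a ha
  funext a
  have hz := hzero a (Finset.mem_univ a)
  by_contra hne
  rcases eq_or_lt_of_le (hp.1 a) with h | h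
  · -- p a = 0 : term = q a > 0, contradiction with = 0
    rw [← h] at hz
    simp at hz
    exact (hqpos a).ne' (by linarith [hz])
  · -- p a > 0, p a ≠ q a
    have hx : 0 < q a / p a := div_pos (hqpos a) h
    have hxne : q a / p a ≠ 1 := by
      intro hcon
      apply hne
      field_simp at hcon
      linarith
    have := Real.log_lt_sub_one_of_pos hx hxne
    have hlog : Real.log (p a / q a) = - Real.log (q a / p a) := by
      rw [← Real.log_inv, inv_div]
    rw [hlog] at hz
    have h2 : q a / p a - 1 = (q a - p a) / p a := by field_simp
    rw [h2] at this
    nlinarith [mul_lt_mul_of_pos_left ‹Real.log (q a / p a) < (q a - p a) / p a› h,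
      div_mul_cancel₀ (q a - p a) (ne_of_gt h)]

lemma KL_le_log_card [Nonempty A] {p : A → ℝ} (hp : IsDist p) :
    KL p (fun _ => ((Fintype.card A : ℝ))⁻¹) ≤ Real.log (Fintype.card A) := by
  have hcard : (0:ℝ) < Fintype.card A := by
    exact_mod_cast Fintype.card_pos
  have : ∀ a, p a * Real.log (p a / ((Fintype.card A : ℝ))⁻¹)
      ≤ p a * Real.log (Fintype.card A) := by
    intro a
    rcases eq_or_lt_of_le (hp.1 a) with h | h
    · simp [← h]
    · rw [div_eq_mul_inv, inv_inv, Real.log_mul (ne_of_gt h) (ne_of_gt hcard)]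
      have hlogp : Real.log (p a) ≤ 0 :=
        Real.log_nonpos (hp.1 a) (dist_le_one hp a)
      nlinarith
  calc KL p (fun _ => ((Fintype.card A : ℝ))⁻¹) ≤ ∑ a, p a * Real.log (Fintype.card A) :=
        Finset.sum_le_sum (fun a _ => this a)
    _ = Real.log (Fintype.card A) := by rw [← Finset.sum_mul, hp.2, one_mul]

lemma unif_isDist {A : Type*} [Fintype A] [Nonempty A] :
    IsDist (fun _ : A => ((Fintype.card A:ℝ))⁻¹) := by
  constructor
  · intro a
    have : (0:ℝ) < Fintype.card A := by exact_mod_cast Fintype.card_pos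
    positivity
  · rw [Finset.sum_const, nsmul_eq_mul, Finset.card_univ, mul_inv_cancel₀]
    exact_mod_cast Fintype.card_ne_zero

end Aux

lemma gibbs {A : Type*} [Fintype A] [Nonempty A]
    (γ η τ : ℝ) (hγ0 : 0 < γ) (hη : 0 < η) (hpar : 1 + η * τ = 1 / γ)
    (Qv q : A → ℝ) (hqpos : ∀ a, 0 < q a) :
    ∃ phat : A → ℝ, IsDist phat ∧ (∀ a, 0 < phat a) ∧
      (∀ a, Real.log (phat a) = (γ * Real.log (q a) - γ * η * Qv a)
            - Real.log (∑ b, Real.exp (γ * Real.log (q b) - γ * η * Qv b))) ∧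
      (∀ p : A → ℝ, IsDist p →
        η * ((∑ a, Qv a * p a) + τ * KL p (fun _ => ((Fintype.card A:ℝ))⁻¹)) + KL p q
        = (1/γ) * KL p phat
          + (η * ((∑ a, Qv a * phat a)
              + τ * KL phat (fun _ => ((Fintype.card A:ℝ))⁻¹)) + KL phat q)) := by
  have hγ' : γ ≠ 0 := ne_of_gt hγ0
  set g : A → ℝ := fun a => Real.exp (γ * Real.log (q a) - γ * η * Qv a) with hg
  set Z : ℝ := ∑ b, g b with hZdef
  have hZ : 0 < Z := Finset.sum_pos (fun b _ => Real.exp_pos _) Finset.univ_nonempty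
  refine ⟨fun a => g a / Z, ⟨fun a => le_of_lt (div_pos (Real.exp_pos _) hZ), ?_⟩,
    fun a => div_pos (Real.exp_pos _) hZ, ?_, ?_⟩
  · rw [← Finset.sum_div, ← hZdef, div_self (ne_of_gt hZ)]
  · intro a
    rw [Real.log_div (ne_of_gt (Real.exp_pos _)) (ne_of_gt hZ), Real.log_exp]
  · -- the main identity
    have hcard : (0:ℝ) < ((Fintype.card A : ℝ))⁻¹ := by
      have : (0:ℝ) < Fintype.card A := by exact_mod_cast Fintype.card_pos
      positivity
    set u : ℝ := ((Fintype.card A : ℝ))⁻¹ with hu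
    set Ct : ℝ := -(1/γ) * Real.log Z - η * τ * Real.log u with hCt
    have key : ∀ p : A → ℝ, IsDist p →
        η * ((∑ a, Qv a * p a) + τ * KL p (fun _ => u)) + KL p q
        = (1/γ) * KL p (fun a => g a / Z) + Ct := by
      intro p hp
      have hterm : ∀ a, η * (Qv a * p a) + η * τ * (p a * Real.log (p a / u))
          + p a * Real.log (p a / q a)
          = (1/γ) * (p a * Real.log (p a / (g a / Z))) + p a * Ct := by
        intro a
        rcases eq_or_lt_of_le (hp.1 a) with h | h
        · rw [← h]; ring
        · have e1 : Real.log (p a / u) = Real.log (p a) - Real.log u :=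
            Real.log_div (ne_of_gt h) (ne_of_gt hcard)
          have e2 : Real.log (p a / q a) = Real.log (p a) - Real.log (q a) :=
            Real.log_div (ne_of_gt h) (ne_of_gt (hqpos a))
          have e3 : Real.log (p a / (g a / Z)) = Real.log (p a)
              - ((γ * Real.log (q a) - γ * η * Qv a) - Real.log Z) := by
            rw [Real.log_div (ne_of_gt h) (ne_of_gt (div_pos (Real.exp_pos _) hZ)),
              Real.log_div (ne_of_gt (Real.exp_pos _)) (ne_of_gt hZ), Real.log_exp]
          rw [e1, e2, e3, hCt]
          have h1γ : 1/γ = 1 + η * τ := hpar.symm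
          have hγτ : γ + γ * η * τ = 1 := by
            have : γ * (1/γ) = γ * (1 + η * τ) := by rw [h1γ]
            rw [mul_one_div, div_self hγ'] at this
            linarith [this]
          rw [h1γ]
          linear_combination (p a * Real.log (q a) - η * Qv a * p a) * hγτ
      have lhs_eq : η * ((∑ a, Qv a * p a) + τ * KL p (fun _ => u)) + KL p q
          = ∑ a, (η * (Qv a * p a) + η * τ * (p a * Real.log (p a / u))
              + p a * Real.log (p a / q a)) := by
        unfold KL
        rw [Finset.sum_add_distrib, Finset.sum_add_distrib, ← Finset.mul_sum, ← Finset.mul_sum]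
        ring
      have rhs_eq : (1/γ) * KL p (fun a => g a / Z) + Ct
          = ∑ a, ((1/γ) * (p a * Real.log (p a / (g a / Z))) + p a * Ct) := by
        unfold KL
        rw [Finset.sum_add_distrib, ← Finset.mul_sum, ← Finset.sum_mul, hp.2, one_mul]
      rw [lhs_eq, rhs_eq]
      exact Finset.sum_congr rfl (fun a _ => hterm a)
    intro p hp
    have h1 := key p hp
    have h2 := key (fun a => g a / Z) ⟨fun a => le_of_lt (div_pos (Real.exp_pos _) hZ), by
      rw [← Finset.sum_div, ← hZdef, div_self (ne_of_gt hZ)]⟩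
    rw [KL_self] at h2
    rw [h1, h2]
    ring


open Filter in
lemma tendsto_zero_of_geo_rec (γ : ℝ) (hγ0 : 0 ≤ γ) (hγ1 : γ < 1) (y u : ℕ → ℝ)
    (hrec : ∀ k, |y (k+1)| ≤ γ * |y k| + u k) (hu0 : ∀ k, 0 ≤ u k)
    (hu : Tendsto u atTop (nhds 0)) : Tendsto y atTop (nhds 0) := by
  rw [Metric.tendsto_atTop]
  intro ε hε
  have h1γ : 0 < 1 - γ := by linarith
  have hδ : 0 < ε/2*(1-γ) := by positivity
  obtain ⟨K, hK⟩ := (Metric.tendsto_atTop.mp hu) (ε/2*(1-γ)) hδ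
  have hKu : ∀ k ≥ K, u k ≤ ε/2*(1-γ) := by
    intro k hk
    have := hK k hk
    rw [Real.dist_eq, sub_zero] at this
    calc u k ≤ |u k| := le_abs_self _
      _ ≤ ε/2*(1-γ) := le_of_lt this
  have claim : ∀ m, |y (K+m)| ≤ γ^m * |y K| + ε/2 := by
    intro m
    induction m with
    | zero => simp; linarith [abs_nonneg (y K), hε]
    | succ m ih =>
      have h1 := hrec (K+m)
      have h2 := hKu (K+m) (Nat.le_add_right K m)
      have h3 : γ * |y (K+m)| ≤ γ * (γ^m * |y K| + ε/2) :=
        mul_le_mul_of_nonneg_left ih hγ0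
      calc |y (K+(m+1))| = |y ((K+m)+1)| := by ring_nf
        _ ≤ γ * |y (K+m)| + u (K+m) := h1
        _ ≤ γ * (γ^m * |y K| + ε/2) + ε/2*(1-γ) := by linarith
        _ = γ^(m+1) * |y K| + ε/2 * (γ + (1-γ)) := by ring
        _ = γ^(m+1) * |y K| + ε/2 := by ring_nf
  have hpow : Tendsto (fun m : ℕ => γ^m * |y K|) atTop (nhds 0) := by
    have := tendsto_pow_atTop_nhds_zero_of_lt_one hγ0 hγ1
    simpa using this.mul_const |y K|
  obtain ⟨M, hM⟩ := (Metric.tendsto_atTop.mp hpow) (ε/2) (by positivity)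
  refine ⟨K + M, fun k hk => ?_⟩
  have hKk : K ≤ k := le_trans (Nat.le_add_right K M) hk
  have hm : M ≤ k - K := by omega
  have hrewrite : K + (k - K) = k := by omega
  have h1 := claim (k - K)
  rw [hrewrite] at h1
  have h2 := hM (k - K) hm
  rw [Real.dist_eq, sub_zero] at h2 ⊢
  have h3 : γ^(k-K) * |y K| ≤ abs (γ^(k-K) * |y K|) := le_abs_self _
  calc |y k| ≤ γ^(k-K) * |y K| + ε/2 := h1
    _ < ε/2 + ε/2 := by linarith [lt_of_abs_lt h2]
    _ = ε := by ring

open Filter in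
lemma tendsto_nat_mul_pow_nhds_zero {γ : ℝ} (hγ0 : 0 ≤ γ) (hγ1 : γ < 1) :
    Tendsto (fun k : ℕ => (k:ℝ) * γ^k) atTop (nhds 0) := by
  have hs := summable_pow_mul_geometric_of_norm_lt_one (R := ℝ) 1
    (r := γ) (by rw [Real.norm_eq_abs, abs_of_nonneg hγ0]; exact hγ1)
  have := hs.tendsto_atTop_zero
  simpa using this

section MDPAux

variable {S A : Type*} [Fintype S] [Nonempty S] [Fintype A] [Nonempty A]

lemma Qf_sub (γ : ℝ) (c : S → A → ℝ) (P : S → A → S → ℝ) (W W' : S → ℝ) (s : S) (a : A) :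
    Qf γ c P W s a - Qf γ c P W' s a = γ * ∑ s', P s a s' * (W s' - W' s') := by
  unfold Qf
  simp only [mul_sub, Finset.sum_sub_distrib, Finset.mul_sum]
  ring

lemma subfix (γ : ℝ) (hγ0 : 0 < γ) (hγ1 : γ < 1)
    (c : S → A → ℝ) (P : S → A → S → ℝ) (hP : ∀ s a, IsDist (P s a))
    (Vf : S → ℝ) (π' : S → A → ℝ) (hπ' : IsPolicy π')
    (hfix : ∀ s, Vf s = ∑ a, π' s a * Qf γ c P Vf s a)
    (W : S → ℝ) (δ : ℝ) (hδ : 0 ≤ δ)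
    (hTW : ∀ s, (∑ a, π' s a * Qf γ c P W s a) ≤ W s + δ) :
    ∀ s, Vf s ≤ W s + δ/(1-γ) := by
  have h1γ : 0 < 1 - γ := by linarith
  obtain ⟨s0, _, hs0⟩ := Finset.exists_mem_eq_sup' (Finset.univ_nonempty (α := S))
    (fun s => Vf s - W s)
  have hle : ∀ s, Vf s - W s ≤ Vf s0 - W s0 := fun s => by
    have h := Finset.le_sup' (fun s => Vf s - W s) (Finset.mem_univ s)
    rw [hs0] at h
    exact h
  set d := Vf s0 - W s0 with hd
  have hQ : ∀ a, Qf γ c P Vf s0 a ≤ Qf γ c P W s0 a + γ * d := by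
    intro a
    have := Qf_sub γ c P Vf W s0 a
    have hsum : ∑ s', P s0 a s' * (Vf s' - W s') ≤ d :=
      sum_mul_le_of_dist (hP s0 a) (fun s' => hle s')
    nlinarith [mul_le_mul_of_nonneg_left hsum (le_of_lt hγ0)]
  have key : Vf s0 - W s0 ≤ γ * d + δ := by
    have h1 : Vf s0 = ∑ a, π' s0 a * Qf γ c P Vf s0 a := hfix s0
    have h2 : ∑ a, π' s0 a * Qf γ c P Vf s0 a
        ≤ ∑ a, π' s0 a * (Qf γ c P W s0 a + γ * d) :=
      Finset.sum_le_sum (fun a _ => mul_le_mul_of_nonneg_left (hQ a) ((hπ' s0).1 a))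
    have h3 : ∑ a, π' s0 a * (Qf γ c P W s0 a + γ * d)
        = (∑ a, π' s0 a * Qf γ c P W s0 a) + γ * d := by
      rw [show (∑ a, π' s0 a * (Qf γ c P W s0 a + γ * d)) = ∑ a, (π' s0 a * Qf γ c P W s0 a + π' s0 a * (γ * d)) from Finset.sum_congr rfl (fun a _ => by ring)]
      rw [Finset.sum_add_distrib, ← Finset.sum_mul, (hπ' s0).2, one_mul]
    have h4 := hTW s0
    linarith
  have hdle : d ≤ γ * d + δ := key
  have hdbound : d ≤ δ/(1-γ) := by
    rw [le_div_iff₀ h1γ]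
    nlinarith
  intro s
  linarith [hle s]

lemma supfix (γ : ℝ) (hγ0 : 0 < γ) (hγ1 : γ < 1)
    (c : S → A → ℝ) (P : S → A → S → ℝ) (hP : ∀ s a, IsDist (P s a))
    (Vf : S → ℝ) (π' : S → A → ℝ) (hπ' : IsPolicy π')
    (hfix : ∀ s, Vf s = ∑ a, π' s a * Qf γ c P Vf s a)
    (W : S → ℝ) (δ : ℝ) (hδ : 0 ≤ δ)
    (hTW : ∀ s, W s - δ ≤ (∑ a, π' s a * Qf γ c P W s a)) :
    ∀ s, W s - δ/(1-γ) ≤ Vf s := by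
  have h1γ : 0 < 1 - γ := by linarith
  obtain ⟨s0, _, hs0⟩ := Finset.exists_mem_eq_sup' (Finset.univ_nonempty (α := S))
    (fun s => W s - Vf s)
  have hle : ∀ s, W s - Vf s ≤ W s0 - Vf s0 := fun s => by
    have h := Finset.le_sup' (fun s => W s - Vf s) (Finset.mem_univ s)
    rw [hs0] at h
    exact h
  set d := W s0 - Vf s0 with hd
  have hQ : ∀ a, Qf γ c P W s0 a ≤ Qf γ c P Vf s0 a + γ * d := by
    intro a
    have := Qf_sub γ c P W Vf s0 a
    have hsum : ∑ s', P s0 a s' * (W s' - Vf s') ≤ d :=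
      sum_mul_le_of_dist (hP s0 a) (fun s' => hle s')
    nlinarith [mul_le_mul_of_nonneg_left hsum (le_of_lt hγ0)]
  have key : W s0 - Vf s0 ≤ γ * d + δ := by
    have h1 : Vf s0 = ∑ a, π' s0 a * Qf γ c P Vf s0 a := hfix s0
    have h2 : ∑ a, π' s0 a * Qf γ c P W s0 a
        ≤ ∑ a, π' s0 a * (Qf γ c P Vf s0 a + γ * d) :=
      Finset.sum_le_sum (fun a _ => mul_le_mul_of_nonneg_left (hQ a) ((hπ' s0).1 a))
    have h3 : ∑ a, π' s0 a * (Qf γ c P Vf s0 a + γ * d)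
        = (∑ a, π' s0 a * Qf γ c P Vf s0 a) + γ * d := by
      rw [show (∑ a, π' s0 a * (Qf γ c P Vf s0 a + γ * d)) = ∑ a, (π' s0 a * Qf γ c P Vf s0 a + π' s0 a * (γ * d)) from Finset.sum_congr rfl (fun a _ => by ring)]
      rw [Finset.sum_add_distrib, ← Finset.sum_mul, (hπ' s0).2, one_mul]
    have h4 := hTW s0
    linarith
  have hdle : d ≤ γ * d + δ := key
  have hdbound : d ≤ δ/(1-γ) := by
    rw [le_div_iff₀ h1γ]
    nlinarith
  intro s
  linarith [hle s]

lemma Vabs (γ : ℝ) (hγ0 : 0 < γ) (hγ1 : γ < 1)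
    (C : ℝ) (c : S → A → ℝ) (hC : ∀ s a, |c s a| ≤ C)
    (P : S → A → S → ℝ) (hP : ∀ s a, IsDist (P s a))
    (Vf : S → ℝ) (π' : S → A → ℝ) (hπ' : IsPolicy π')
    (hfix : ∀ s, Vf s = ∑ a, π' s a * Qf γ c P Vf s a) :
    ∀ s, |Vf s| ≤ C/(1-γ) := by
  have h1γ : 0 < 1 - γ := by linarith
  have hC0 : 0 ≤ C := le_trans (abs_nonneg _) (hC (Classical.arbitrary S) (Classical.arbitrary A))
  have hB : C + γ * (C/(1-γ)) = C/(1-γ) := by field_simp; ring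
  have hub := subfix γ hγ0 hγ1 c P hP Vf π' hπ' hfix (fun _ => C/(1-γ)) 0 le_rfl ?ub
  have hlb := supfix γ hγ0 hγ1 c P hP Vf π' hπ' hfix (fun _ => -(C/(1-γ))) 0 le_rfl ?lb
  case ub =>
    intro s
    have : ∀ a, Qf γ c P (fun _ => C/(1-γ)) s a ≤ C/(1-γ) := by
      intro a
      unfold Qf
      have h1 : ∑ s', P s a s' * (C/(1-γ)) = C/(1-γ) := by
        rw [← Finset.sum_mul, (hP s a).2, one_mul]
      rw [h1]
      have := (abs_le.mp (hC s a)).2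
      linarith [hB]
    have := sum_mul_le_of_dist (hπ' s) this
    simpa using this
  case lb =>
    intro s
    have : ∀ a, -(C/(1-γ)) ≤ Qf γ c P (fun _ => -(C/(1-γ))) s a := by
      intro a
      unfold Qf
      have h1 : ∑ s', P s a s' * (-(C/(1-γ))) = -(C/(1-γ)) := by
        rw [← Finset.sum_mul, (hP s a).2, one_mul]
      rw [h1]
      have := (abs_le.mp (hC s a)).1
      nlinarith [hB]
    have := le_sum_mul_of_dist (hπ' s) this
    simpa using this
  intro s
  rw [abs_le]
  constructor
  · have := hlb s; simpa using this
  · have := hub s; simpa using this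

end MDPAux


set_option maxHeartbeats 2000000 in
/-- last-iterate policy convergence of linearly converging HPMD
(Theorem 5): π_k → π*_U, the maximal-entropy optimal policy. -/
theorem stmt13 {S A : Type*} [Fintype S] [Nonempty S] [Fintype A] [Nonempty A]
    (γ : ℝ) (hγ : 0 < γ ∧ γ < 1)
    (C : ℝ) (c : S → A → ℝ) (hC : ∀ s a, |c s a| ≤ C)
    (P : S → A → S → ℝ) (hP : ∀ s a, IsDist (P s a))
    (V : (S → A → ℝ) → S → ℝ)
    (hV : ∀ π, IsPolicy π → ∀ s, V π s = ∑ a, π s a * Qf γ c P (V π) s a)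
    (πstar : S → A → ℝ) (hπstar : IsPolicy πstar)
    (hoptimal : ∀ π', IsPolicy π' → ∀ s, V πstar s ≤ V π' s)
    (ν : S → ℝ) (hν : IsDist ν) (hνpos : ∀ s, 0 < ν s)
    (hνstat : ∀ s', ν s' = ∑ s, ν s * ∑ a, πstar s a * P s a s')
    -- Q* = Q^{π*}
    (Qst : S → A → ℝ) (hQst : Qst = Qf γ c P (V πstar))
    -- some state has a suboptimal action (A*(s) ≠ A for some s)
    (hgap : ∃ s a, Qst s a ≠ Qmin Qst s)
    -- HPMD parameters: 1 + η_k τ_k = 1/γ and η_k = γ^{−2(k+1)}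
    (η τ : ℕ → ℝ)
    (hparam : ∀ k, 1 + η k * τ k = 1 / γ)
    (hηdef : ∀ k, η k = γ ^ (-(2 * ((k : ℤ) + 1))))
    -- HPMD iterates
    (π : ℕ → S → A → ℝ) (hpol : ∀ k, IsPolicy (π k))
    (hinit : ∀ s a, π 0 s a = 1 / (Fintype.card A : ℝ))
    (hstep : ∀ k s, ∀ p : A → ℝ, IsDist p →
      η k * ((∑ a, Qf γ c P (V (π k)) s a * π (k+1) s a) + τ k * KL (π (k+1) s) (π 0 s))
          + KL (π (k+1) s) (π k s) ≤
      η k * ((∑ a, Qf γ c P (V (π k)) s a * p a) + τ k * KL p (π 0 s)) + KL p (π k s)) :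
    ∀ s a, Filter.Tendsto (fun k => π k s a) Filter.atTop (nhds (piU Qst s a)) := by
  obtain ⟨hγ0, hγ1⟩ := hγ
  have hγ' : γ ≠ 0 := ne_of_gt hγ0
  have h1γ : 0 < 1 - γ := by linarith
  subst hQst
  set Qs : S → A → ℝ := Qf γ c P (V πstar) with hQs
  -- cards and logs
  have hcard1 : 1 ≤ Fintype.card A := Fintype.card_pos
  have hcardR : (0:ℝ) < (Fintype.card A : ℝ) := by exact_mod_cast Fintype.card_pos
  set L : ℝ := Real.log (Fintype.card A) with hLdef
  have hL0 : 0 ≤ L := Real.log_nonneg (by exact_mod_cast hcard1)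
  have hπ0u : ∀ s : S, π 0 s = fun _ => ((Fintype.card A : ℝ))⁻¹ :=
    fun s => funext (fun a => by rw [hinit s a, one_div])
  have hπ0pos : ∀ (s : S) (a : A), 0 < π 0 s a := fun s a => by
    rw [hinit s a]; positivity
  -- value bounds
  set B : ℝ := C / (1-γ) with hBdef
  have hC0 : 0 ≤ C := le_trans (abs_nonneg _) (hC (Classical.arbitrary S) (Classical.arbitrary A))
  have hB0 : 0 ≤ B := by positivity
  have hCB : C + γ * B = B := by rw [hBdef]; field_simp; ring
  have hVkb : ∀ k s, |V (π k) s| ≤ B := fun k s =>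
    Vabs γ hγ0 hγ1 C c hC P hP (V (π k)) (π k) (hpol k) (hV (π k) (hpol k)) s
  have hVsb : ∀ s, |V πstar s| ≤ B :=
    fun s => Vabs γ hγ0 hγ1 C c hC P hP (V πstar) πstar hπstar (hV πstar hπstar) s
  have hQfb : ∀ (W : S → ℝ), (∀ s', |W s'| ≤ B) → ∀ s a, |Qf γ c P W s a| ≤ B := by
    intro W hW s a
    have h1 : |∑ s', P s a s' * W s'| ≤ B := abs_sum_mul_le_of_dist (hP s a) hW
    have h2 : |c s a + γ * ∑ s', P s a s' * W s'| ≤ |c s a| + γ * |∑ s', P s a s' * W s'| := by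
      calc |c s a + γ * ∑ s', P s a s' * W s'| ≤ |c s a| + |γ * ∑ s', P s a s' * W s'| :=
            abs_add_le _ _
        _ = |c s a| + γ * |∑ s', P s a s' * W s'| := by
            rw [abs_mul, abs_of_pos hγ0]
    have := hC s a
    unfold Qf
    nlinarith [mul_le_mul_of_nonneg_left h1 (le_of_lt hγ0)]
  have hQsb : ∀ s a, |Qs s a| ≤ B := fun s a => hQfb (V πstar) hVsb s a
  have hQkb : ∀ k s a, |Qf γ c P (V (π k)) s a| ≤ B := fun k s a =>
    hQfb (V (π k)) (hVkb k) s a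
  -- ε
  set ε : ℕ → ℝ := fun k =>
    Finset.univ.sup' Finset.univ_nonempty (fun s => V (π k) s - V πstar s) with hεdef
  have hεub : ∀ k s, V (π k) s - V πstar s ≤ ε k := fun k s => by
    simp only [hεdef]
    exact Finset.le_sup' (fun s => V (π k) s - V πstar s) (Finset.mem_univ s)
  have hVlow : ∀ k s, 0 ≤ V (π k) s - V πstar s := fun k s => by
    linarith [hoptimal (π k) (hpol k) s]
  have hε0 : ∀ k, 0 ≤ ε k := fun k =>
    le_trans (hVlow k (Classical.arbitrary S)) (hεub k (Classical.arbitrary S))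
  have hVd : ∀ k s, |V (π k) s - V πstar s| ≤ ε k := fun k s =>
    abs_le.mpr ⟨by linarith [hVlow k s, hε0 k], hεub k s⟩
  have hQd : ∀ k s a, |Qf γ c P (V (π k)) s a - Qs s a| ≤ γ * ε k := by
    intro k s a
    rw [hQs, Qf_sub γ c P (V (π k)) (V πstar) s a, abs_mul, abs_of_pos hγ0]
    exact mul_le_mul_of_nonneg_left
      (abs_sum_mul_le_of_dist (hP s a) (fun s' => hVd k s')) (le_of_lt hγ0)
  -- step sizes
  have hηval : ∀ k, η k = (γ^(2*k+2))⁻¹ := by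
    intro k
    rw [hηdef k]
    have h1 : (-(2 * ((k:ℤ) + 1))) = -((2*k+2 : ℕ) : ℤ) := by push_cast; ring
    rw [h1, zpow_neg, zpow_natCast]
  have hηpos : ∀ k, 0 < η k := fun k => by rw [hηval k]; positivity
  have hηinv : ∀ k, (η k)⁻¹ = γ^(2*k+2) := fun k => by rw [hηval k, inv_inv]
  have hτval : ∀ k, τ k = (1-γ) * γ^(2*k+1) := by
    intro k
    have h := hparam k
    have hne : η k ≠ 0 := ne_of_gt (hηpos k)
    have h2 : η k * τ k = 1/γ - 1 := by linarith
    have h3 : τ k = (η k)⁻¹ * (1/γ - 1) := by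
      field_simp at h2 ⊢
      linarith [h2]
    rw [h3, hηinv k]
    have : γ^(2*k+2) = γ^(2*k+1) * γ := by ring
    rw [this]
    field_simp
  have hτpos : ∀ k, 0 < τ k := fun k => by rw [hτval k]; positivity
  -- closed form of the update
  have upd : ∀ k s, (∀ a, 0 < π k s a) →
      ((∀ a, 0 < π (k+1) s a) ∧
       (∃ Zc : ℝ, ∀ a, Real.log (π (k+1) s a)
          = γ * Real.log (π k s a) - γ * η k * Qf γ c P (V (π k)) s a - Zc) ∧
       (∀ p : A → ℝ, IsDist p →
          η k * ((∑ a, Qf γ c P (V (π k)) s a * p a)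
              + τ k * KL p (fun _ => ((Fintype.card A:ℝ))⁻¹)) + KL p (π k s)
          = (1/γ) * KL p (π (k+1) s)
            + (η k * ((∑ a, Qf γ c P (V (π k)) s a * π (k+1) s a)
                + τ k * KL (π (k+1) s) (fun _ => ((Fintype.card A:ℝ))⁻¹))
              + KL (π (k+1) s) (π k s)))) := by
    intro k s hpos
    obtain ⟨phat, hphat_dist, hphat_pos, hphat_log, hphat_id⟩ :=
      gibbs γ (η k) (τ k) hγ0 (hηpos k) (hparam k)
        (Qf γ c P (V (π k)) s) (π k s) hpos
    have hstep1 := hstep k s phat hphat_dist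
    rw [hπ0u s] at hstep1
    have hid1 := hphat_id (π (k+1) s) ((hpol (k+1)) s)
    have hγinv : 0 < 1/γ := by positivity
    have hKL : KL (π (k+1) s) phat ≤ 0 := by nlinarith [hid1, hstep1]
    have hpe : π (k+1) s = phat :=
      KL_eq_of_le_zero ((hpol (k+1)) s) hphat_dist hphat_pos hKL
    refine ⟨?_, ?_, ?_⟩
    · intro a; rw [hpe]; exact hphat_pos a
    · refine ⟨Real.log (∑ b, Real.exp (γ * Real.log (π k s b)
          - γ * η k * Qf γ c P (V (π k)) s b)), fun a => ?_⟩
      rw [hpe]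
      have := hphat_log a
      linarith [this]
    · intro p hp
      rw [hpe]
      exact hphat_id p hp
  have hpos : ∀ k s a, 0 < π k s a := by
    intro k
    induction k with
    | zero => exact hπ0pos
    | succ n ih => exact fun s => (upd n s (ih s)).1
  -- log-ratio recursion
  set lr : ℕ → S → A → A → ℝ :=
    fun k s a b => Real.log (π k s a) - Real.log (π k s b) with hlrdef
  have hlr0 : ∀ s a b, lr 0 s a b = 0 := by
    intro s a b
    simp only [hlrdef, hinit, sub_self]
  have hlrrec : ∀ k s a b, lr (k+1) s a b
      = γ * lr k s a b - γ * η k * (Qf γ c P (V (π k)) s a - Qf γ c P (V (π k)) s b) := by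
    intro k s a b
    obtain ⟨Zc, hZc⟩ := (upd k s (hpos k s)).2.1
    simp only [hlrdef, hZc a, hZc b]
    ring
  have hexp : ∀ k s a b, Real.exp (lr k s a b) = π k s a / π k s b := by
    intro k s a b
    simp only [hlrdef]
    rw [Real.exp_sub, Real.exp_log (hpos k s a), Real.exp_log (hpos k s b)]
  have hmass : ∀ k s a b, π k s a ≤ Real.exp (lr k s a b) := by
    intro k s a b
    rw [hexp k s a b, le_div_iff₀ (hpos k s b)]
    exact mul_le_of_le_one_right (le_of_lt (hpos k s a)) (dist_le_one ((hpol k) s) b)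
  -- descent with slack
  have hdesc : ∀ k s, V (π (k+1)) s ≤ V (π k) s + τ k * L / (1-γ) := by
    intro k s
    have hδ0 : 0 ≤ τ k * L := mul_nonneg (le_of_lt (hτpos k)) hL0
    have hTsum : ∀ s', (∑ a, π (k+1) s' a * Qf γ c P (V (π k)) s' a)
        ≤ V (π k) s' + τ k * L := by
      intro s'
      have h := hstep k s' (π k s') ((hpol k) s')
      rw [hπ0u s', KL_self] at h
      have hKL1 : 0 ≤ KL (π (k+1) s') (π k s') :=
        KL_nonneg ((hpol (k+1)) s') ((hpol k) s') (hpos k s')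
      have hKL2 : 0 ≤ KL (π (k+1) s') (fun _ => ((Fintype.card A:ℝ))⁻¹) :=
        KL_nonneg ((hpol (k+1)) s') (unif_isDist (A := A)) (fun _ => by positivity)
      have hKL3 : KL (π k s') (fun _ => ((Fintype.card A:ℝ))⁻¹) ≤ L :=
        KL_le_log_card ((hpol k) s')
      have hVk : V (π k) s' = ∑ a, Qf γ c P (V (π k)) s' a * π k s' a := by
        rw [hV (π k) (hpol k) s']
        exact Finset.sum_congr rfl (fun a _ => mul_comm _ _)
      have hη := hηpos k
      have hτ := hτpos k
      have hmain : η k * (∑ a, Qf γ c P (V (π k)) s' a * π (k+1) s' a)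
          ≤ η k * (V (π k) s' + τ k * L) := by
        rw [hVk]
        nlinarith [mul_le_mul_of_nonneg_left hKL3 (le_of_lt (mul_pos hη hτ)),
          mul_nonneg (le_of_lt (mul_pos hη hτ)) hKL2]
      have h2 := (mul_le_mul_iff_right₀ hη).mp hmain
      calc (∑ a, π (k+1) s' a * Qf γ c P (V (π k)) s' a)
          = ∑ a, Qf γ c P (V (π k)) s' a * π (k+1) s' a :=
            Finset.sum_congr rfl (fun a _ => mul_comm _ _)
        _ ≤ V (π k) s' + τ k * L := h2
    exact subfix γ hγ0 hγ1 c P hP (V (π (k+1))) (π (k+1)) (hpol (k+1))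
      (hV (π (k+1)) (hpol (k+1))) (V (π k)) (τ k * L) hδ0 hTsum s
  -- three-point inequality (multiplied by η)
  have htp : ∀ k s,
      η k * ((∑ a, Qf γ c P (V (π k)) s a * π (k+1) s a)
           - (∑ a, Qf γ c P (V (π k)) s a * πstar s a))
      ≤ (KL (πstar s) (π k s) - KL (πstar s) (π (k+1) s)) + η k * τ k * L := by
    intro k s
    have hid := (upd k s (hpos k s)).2.2 (πstar s) (hπstar s)
    have hKLa : KL (πstar s) (fun _ => ((Fintype.card A:ℝ))⁻¹) ≤ L :=
      KL_le_log_card (hπstar s)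
    have hKLb : 0 ≤ KL (π (k+1) s) (fun _ => ((Fintype.card A:ℝ))⁻¹) :=
      KL_nonneg ((hpol (k+1)) s) (unif_isDist (A := A)) (fun _ => by positivity)
    have hKLc : 0 ≤ KL (π (k+1) s) (π k s) :=
      KL_nonneg ((hpol (k+1)) s) ((hpol k) s) (hpos k s)
    have hKLd : 0 ≤ KL (πstar s) (π (k+1) s) :=
      KL_nonneg (hπstar s) ((hpol (k+1)) s) (hpos (k+1) s)
    have h1γle : 1 ≤ 1/γ := by rw [le_div_iff₀ hγ0]; linarith
    have hη := hηpos k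
    have hτ := hτpos k
    nlinarith [mul_le_mul_of_nonneg_left hKLa (le_of_lt (mul_pos hη hτ)),
      mul_nonneg (sub_nonneg.mpr h1γle) hKLd,
      mul_nonneg (le_of_lt (mul_pos hη hτ)) hKLb]
  -- stationary-distribution exchange
  have hexch : ∀ f : S → ℝ,
      ∑ s, ν s * (∑ a, πstar s a * (∑ s', P s a s' * f s')) = ∑ s', ν s' * f s' := by
    intro f
    calc ∑ s, ν s * (∑ a, πstar s a * (∑ s', P s a s' * f s'))
        = ∑ s, ∑ a, ∑ s', ν s * (πstar s a * (P s a s' * f s')) := by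
          simp only [Finset.mul_sum]
      _ = ∑ s, ∑ s', ∑ a, ν s * (πstar s a * (P s a s' * f s')) :=
          Finset.sum_congr rfl (fun s _ => Finset.sum_comm)
      _ = ∑ s', ∑ s, ∑ a, ν s * (πstar s a * (P s a s' * f s')) := Finset.sum_comm
      _ = ∑ s', (∑ s, ν s * ∑ a, πstar s a * P s a s') * f s' := by
          apply Finset.sum_congr rfl; intro s' _
          rw [Finset.sum_mul]
          apply Finset.sum_congr rfl; intro s _
          rw [Finset.mul_sum, Finset.sum_mul]
          apply Finset.sum_congr rfl; intro a _
          ring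
      _ = ∑ s', ν s' * f s' := by
          apply Finset.sum_congr rfl; intro s' _
          congr 1
          exact (hνstat s').symm
  -- weighted error recursion
  set e : ℕ → ℝ := fun k => ∑ s, ν s * (V (π k) s - V πstar s) with hedef
  set G : ℕ → ℝ := fun k => ∑ s, ν s * KL (πstar s) (π k s) with hGdef
  have he0 : ∀ k, 0 ≤ e k := fun k =>
    Finset.sum_nonneg (fun s _ => mul_nonneg (le_of_lt (hνpos s)) (hVlow k s))
  have hG0 : ∀ k, 0 ≤ G k := fun k =>
    Finset.sum_nonneg (fun s _ => mul_nonneg (le_of_lt (hνpos s))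
      (KL_nonneg (hπstar s) ((hpol k) s) (hpos k s)))
  have herec : ∀ k, e (k+1) ≤ γ * e k + γ^(2*k+2) * (G k - G (k+1)) + 2*γ^(2*k+1)*L := by
    intro k
    have hper : ∀ s, V (π (k+1)) s - V πstar s
        ≤ γ*(τ k * L/(1-γ))
          + ((η k)⁻¹*(KL (πstar s) (π k s) - KL (πstar s) (π (k+1) s)) + τ k * L)
          + γ * (∑ a, πstar s a * (∑ s', P s a s' * (V (π k) s' - V πstar s'))) := by
      intro s
      have hVk1 : V (π (k+1)) s = ∑ a, π (k+1) s a * Qf γ c P (V (π (k+1))) s a :=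
        hV _ (hpol _) s
      have hsplit : V (π (k+1)) s
          = (∑ a, π (k+1) s a * (Qf γ c P (V (π (k+1))) s a - Qf γ c P (V (π k)) s a))
            + ∑ a, π (k+1) s a * Qf γ c P (V (π k)) s a := by
        rw [hVk1, ← Finset.sum_add_distrib]
        apply Finset.sum_congr rfl; intro a _; ring
      have hT1 : (∑ a, π (k+1) s a * (Qf γ c P (V (π (k+1))) s a - Qf γ c P (V (π k)) s a))
          ≤ γ * (τ k * L/(1-γ)) := by
        apply sum_mul_le_of_dist ((hpol (k+1)) s)
        intro a
        rw [Qf_sub]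
        have hin : ∑ s', P s a s' * (V (π (k+1)) s' - V (π k) s') ≤ τ k * L/(1-γ) :=
          sum_mul_le_of_dist (hP s a) (fun s' => by linarith [hdesc k s'])
        exact mul_le_mul_of_nonneg_left hin (le_of_lt hγ0)
      have hX : (∑ a, π (k+1) s a * Qf γ c P (V (π k)) s a)
          ≤ (∑ a, πstar s a * Qf γ c P (V (π k)) s a)
            + ((η k)⁻¹*(KL (πstar s) (π k s) - KL (πstar s) (π (k+1) s)) + τ k * L) := by
        have h := htp k s
        have hη := hηpos k
        have hflip1 : (∑ a, Qf γ c P (V (π k)) s a * π (k+1) s a)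
            = ∑ a, π (k+1) s a * Qf γ c P (V (π k)) s a :=
          Finset.sum_congr rfl (fun a _ => mul_comm _ _)
        have hflip2 : (∑ a, Qf γ c P (V (π k)) s a * πstar s a)
            = ∑ a, πstar s a * Qf γ c P (V (π k)) s a :=
          Finset.sum_congr rfl (fun a _ => mul_comm _ _)
        rw [hflip1, hflip2] at h
        have h2 := mul_le_mul_of_nonneg_left h (le_of_lt (inv_pos.mpr hη))
        rw [← mul_assoc, inv_mul_cancel₀ (ne_of_gt hη), one_mul] at h2
        have h3 : (η k)⁻¹ * ((KL (πstar s) (π k s) - KL (πstar s) (π (k+1) s)) + η k * τ k * L)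
            = (η k)⁻¹*(KL (πstar s) (π k s) - KL (πstar s) (π (k+1) s)) + τ k * L := by
          have hne : η k ≠ 0 := ne_of_gt hη
          field_simp
        rw [h3] at h2
        linarith
      have hXs : (∑ a, πstar s a * Qf γ c P (V (π k)) s a)
          = V πstar s + γ * (∑ a, πstar s a * (∑ s', P s a s' * (V (π k) s' - V πstar s'))) := by
        have h1 : ∀ a, πstar s a * Qf γ c P (V (π k)) s a
            = πstar s a * Qf γ c P (V πstar) s a
              + γ * (πstar s a * (∑ s', P s a s' * (V (π k) s' - V πstar s'))) := by
          intro a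
          have h2 := Qf_sub γ c P (V (π k)) (V πstar) s a
          linear_combination (πstar s a) * h2
        calc (∑ a, πstar s a * Qf γ c P (V (π k)) s a)
            = ∑ a, (πstar s a * Qf γ c P (V πstar) s a
                + γ * (πstar s a * (∑ s', P s a s' * (V (π k) s' - V πstar s')))) :=
              Finset.sum_congr rfl (fun a _ => h1 a)
          _ = (∑ a, πstar s a * Qf γ c P (V πstar) s a)
              + γ * (∑ a, πstar s a * (∑ s', P s a s' * (V (π k) s' - V πstar s'))) := by
              rw [Finset.sum_add_distrib, ← Finset.mul_sum]
          _ = V πstar s + γ * (∑ a, πstar s a * (∑ s', P s a s' * (V (π k) s' - V πstar s'))) := by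
              rw [← hV πstar hπstar s]
      linarith [hsplit, hT1, hX, hXs]
    have hsum := Finset.sum_le_sum (fun s (_ : s ∈ Finset.univ) =>
      mul_le_mul_of_nonneg_left (hper s) (le_of_lt (hνpos s)))
    have hRHS : (∑ s, ν s * (γ*(τ k * L/(1-γ))
          + ((η k)⁻¹*(KL (πstar s) (π k s) - KL (πstar s) (π (k+1) s)) + τ k * L)
          + γ * (∑ a, πstar s a * (∑ s', P s a s' * (V (π k) s' - V πstar s')))))
        = (γ*(τ k * L/(1-γ)) + τ k * L) + (η k)⁻¹ * (G k - G (k+1)) + γ * e k := by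
      have h1 : ∀ s, ν s * (γ*(τ k * L/(1-γ))
            + ((η k)⁻¹*(KL (πstar s) (π k s) - KL (πstar s) (π (k+1) s)) + τ k * L)
            + γ * (∑ a, πstar s a * (∑ s', P s a s' * (V (π k) s' - V πstar s'))))
          = ν s * (γ*(τ k * L/(1-γ)) + τ k * L)
            + ((η k)⁻¹ * (ν s * KL (πstar s) (π k s))
               - (η k)⁻¹ * (ν s * KL (πstar s) (π (k+1) s)))
            + γ * (ν s * (∑ a, πstar s a * (∑ s', P s a s' * (V (π k) s' - V πstar s')))) := by
        intro s; ring
      rw [Finset.sum_congr rfl (fun s _ => h1 s)]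
      rw [Finset.sum_add_distrib, Finset.sum_add_distrib, Finset.sum_sub_distrib]
      rw [← Finset.sum_mul, hν.2, one_mul, ← Finset.mul_sum, ← Finset.mul_sum, ← Finset.mul_sum]
      rw [hexch (fun s' => V (π k) s' - V πstar s')]
      simp only [hedef, hGdef]
      ring
    rw [hRHS] at hsum
    have hcoef : γ*(τ k * L/(1-γ)) + τ k * L ≤ 2*γ^(2*k+1)*L := by
      rw [hτval k]
      have h1 : γ*((1-γ)*γ^(2*k+1) * L/(1-γ)) + (1-γ)*γ^(2*k+1)*L = γ^(2*k+1)*L := by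
        field_simp
        ring
      have h2 : 0 ≤ γ^(2*k+1)*L := mul_nonneg (by positivity) hL0
      linarith
    have hee : e (k+1) = ∑ s, ν s * (V (π (k+1)) s - V πstar s) := by simp only [hedef]
    rw [← hee] at hsum
    rw [hηinv k] at hsum
    linarith
  -- Lyapunov function and linear decay
  set Ψ : ℕ → ℝ := fun k => e k + γ^(2*k+1) * G k with hΨdef
  have hΨrec : ∀ k, Ψ (k+1) ≤ γ * Ψ k + 2*γ^(k+1)*L := by
    intro k
    have h := herec k
    have hGk1 : 0 ≤ G (k+1) := hG0 (k+1)
    have hexp1 : 2*(k+1)+1 = 2*k+3 := by ring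
    have hpow1 : γ^(2*k+3) ≤ γ^(2*k+2) :=
      pow_le_pow_of_le_one (le_of_lt hγ0) (le_of_lt hγ1) (by omega)
    have hpow2 : γ^(2*k+1) ≤ γ^(k+1) :=
      pow_le_pow_of_le_one (le_of_lt hγ0) (le_of_lt hγ1) (by omega)
    have h4 : γ^(2*k+2)*(G k - G (k+1)) = γ^(2*k+2)*G k - γ^(2*k+2)*G (k+1) := by ring
    have h5 : γ^(2*k+3) * G (k+1) ≤ γ^(2*k+2) * G (k+1) :=
      mul_le_mul_of_nonneg_right hpow1 hGk1
    have h7 : 2*γ^(2*k+1)*L ≤ 2*γ^(k+1)*L := by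
      have h7a := mul_le_mul_of_nonneg_right hpow2 hL0
      linarith
    have h8 : γ*(e k + γ^(2*k+1)*G k) = γ*e k + γ^(2*k+2)*G k := by ring
    show e (k+1) + γ^(2*(k+1)+1) * G (k+1) ≤ γ * (e k + γ^(2*k+1)*G k) + 2*γ^(k+1)*L
    rw [hexp1, h8]
    linarith [h, h4, h5, h7]
  have hΨbd : ∀ k, Ψ k ≤ γ^k * (Ψ 0 + k*(2*L)) := by
    intro k
    induction k with
    | zero => simp
    | succ n ih =>
      have h1 := hΨrec n
      have h2 : γ * Ψ n ≤ γ * (γ^n * (Ψ 0 + n*(2*L))) :=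
        mul_le_mul_of_nonneg_left ih (le_of_lt hγ0)
      calc Ψ (n+1) ≤ γ * (γ^n * (Ψ 0 + n*(2*L))) + 2*γ^(n+1)*L := by linarith
        _ = γ^(n+1) * (Ψ 0 + n*(2*L) + 2*L) := by ring
        _ = γ^(n+1) * (Ψ 0 + (((n+1 : ℕ)):ℝ)*(2*L)) := by push_cast; ring
  -- pointwise linear decay of ε
  set νmin : ℝ := Finset.univ.inf' Finset.univ_nonempty ν with hνmindef
  have hνmin0 : 0 < νmin := by
    rw [hνmindef, Finset.lt_inf'_iff]
    exact fun s _ => hνpos s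
  have hεlin : ∀ k, ε k ≤ γ^k * (Ψ 0 + k*(2*L)) / νmin := by
    intro k
    have heΨ : e k ≤ Ψ k := by
      simp only [hΨdef]
      have := mul_nonneg (pow_nonneg (le_of_lt hγ0) (2*k+1)) (hG0 k)
      linarith
    have h2 := le_trans heΨ (hΨbd k)
    obtain ⟨s0, _, hs0⟩ := Finset.exists_mem_eq_sup' (Finset.univ_nonempty (α := S))
      (fun s => V (π k) s - V πstar s)
    have hεeq : ε k = V (π k) s0 - V πstar s0 := by
      simp only [hεdef]; rw [hs0]
    have hterm : ν s0 * (V (π k) s0 - V πstar s0) ≤ e k := by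
      simp only [hedef]
      exact Finset.single_le_sum
        (f := fun s => ν s * (V (π k) s - V πstar s))
        (fun s _ => mul_nonneg (le_of_lt (hνpos s)) (hVlow k s)) (Finset.mem_univ s0)
    have hν0 : νmin ≤ ν s0 := by
      simp only [hνmindef]
      exact Finset.inf'_le _ (Finset.mem_univ s0)
    have h3 : νmin * ε k ≤ e k := by
      rw [hεeq]
      calc νmin * (V (π k) s0 - V πstar s0) ≤ ν s0 * (V (π k) s0 - V πstar s0) :=
            mul_le_mul_of_nonneg_right hν0 (hVlow k s0)
        _ ≤ e k := hterm
    rw [le_div_iff₀ hνmin0]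
    calc ε k * νmin = νmin * ε k := by ring
      _ ≤ e k := h3
      _ ≤ γ^k * (Ψ 0 + (k:ℝ)*(2*L)) := h2
  have hεt : Filter.Tendsto ε Filter.atTop (nhds 0) := by
    have h1 : Filter.Tendsto (fun k : ℕ => γ^k) Filter.atTop (nhds 0) :=
      tendsto_pow_atTop_nhds_zero_of_lt_one (le_of_lt hγ0) hγ1
    have h2 := tendsto_nat_mul_pow_nhds_zero (le_of_lt hγ0) hγ1
    have h3 : Filter.Tendsto (fun k : ℕ => γ^k * (Ψ 0 + k*(2*L))) Filter.atTop (nhds 0) := by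
      have h4 := (h1.const_mul (Ψ 0)).add (h2.const_mul (2*L))
      simp only [mul_zero, add_zero] at h4
      apply h4.congr
      intro k
      ring
    have h5 : Filter.Tendsto (fun k : ℕ => γ^k * (Ψ 0 + k*(2*L)) / νmin) Filter.atTop (nhds 0) := by
      have := h3.div_const νmin
      simpa using this
    exact tendsto_of_tendsto_of_tendsto_of_le_of_le tendsto_const_nhds h5 hε0 hεlin
  -- the gap
  set Sub : Finset (S × A) :=
    Finset.univ.filter (fun p : S × A => Qs p.1 p.2 ≠ Qmin Qs p.1) with hSubdef
  have hSubne : Sub.Nonempty := by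
    obtain ⟨s, a, h⟩ := hgap
    exact ⟨(s, a), by simp [hSubdef, h]⟩
  set Δ : ℝ := Sub.inf' hSubne (fun p => Qs p.1 p.2 - Qmin Qs p.1) with hΔdef
  have hQminle : ∀ s a, Qmin Qs s ≤ Qs s a := fun s a =>
    Finset.inf'_le _ (Finset.mem_univ a)
  have hΔpos : 0 < Δ := by
    rw [hΔdef, Finset.lt_inf'_iff]
    intro p hp
    rw [hSubdef, Finset.mem_filter] at hp
    have := hQminle p.1 p.2
    cases lt_or_eq_of_le this with
    | inl h => linarith
    | inr h => exact absurd h.symm hp.2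
  have hΔle : ∀ s a, a ∉ Astar Qs s → Δ ≤ Qs s a - Qmin Qs s := by
    intro s a ha
    have hmem : (s, a) ∈ Sub := by
      rw [hSubdef, Finset.mem_filter]
      refine ⟨Finset.mem_univ _, ?_⟩
      intro h
      exact ha (by rw [Astar, Finset.mem_filter]; exact ⟨Finset.mem_univ _, h⟩)
    have := Finset.inf'_le (fun p : S × A => Qs p.1 p.2 - Qmin Qs p.1) hmem
    rw [hΔdef]
    exact this
  -- the argmin selector
  have hbs : ∀ s : S, ∃ b, Qs s b = Qmin Qs s := by
    intro s
    obtain ⟨b, _, hb⟩ := Finset.exists_mem_eq_inf' (Finset.univ_nonempty (α := A)) (Qs s)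
    exact ⟨b, hb.symm⟩
  choose bstar hbstar using hbs
  have hbmem : ∀ s, bstar s ∈ Astar Qs s := fun s => by
    rw [Astar, Finset.mem_filter]
    exact ⟨Finset.mem_univ _, hbstar s⟩
  -- k0 : the time after which ε is small
  have hεsmall : ∃ k0, ∀ k ≥ k0, ε k ≤ Δ/(4*γ) := by
    have hpos4 : (0:ℝ) < Δ/(4*γ) := by positivity
    have hev := hεt.eventually_le_const hpos4
    exact Filter.eventually_atTop.mp hev
  obtain ⟨k0, hk0⟩ := hεsmall
  -- Q-value gap at time k ≥ k0
  have hD : ∀ k, k ≥ k0 → ∀ s a, a ∉ Astar Qs s →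
      Δ/2 ≤ Qf γ c P (V (π k)) s a - Qf γ c P (V (π k)) s (bstar s) := by
    intro k hk s a ha
    have h1 := abs_le.mp (hQd k s a)
    have h2 := abs_le.mp (hQd k s (bstar s))
    have h3 := hΔle s a ha
    have h4 := hbstar s
    have h5 := hk0 k hk
    have hγε : γ * ε k ≤ Δ/4 := by
      have h6 := mul_le_mul_of_nonneg_left h5 (le_of_lt hγ0)
      calc γ * ε k ≤ γ * (Δ/(4*γ)) := h6
        _ = Δ/4 := by field_simp
    linarith [h1.1, h2.2]
  -- geometric quantities
  set θ : ℝ := Δ/2 * γ with hθdef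
  have hθ0 : 0 < θ := by rw [hθdef]; positivity
  set r : ℝ := (γ^2)⁻¹ with hrdef
  have hr1 : 1 < r := by
    rw [hrdef]
    rw [lt_inv_comm₀] <;> nlinarith
  have hr0 : 0 < r := lt_trans one_pos hr1
  have hrpow : ∀ k : ℕ, (γ^(2*k))⁻¹ = r^k := by
    intro k
    rw [hrdef, inv_pow, pow_mul]
  have hγηθ : ∀ k, γ * η k * (Δ/2) = θ * r^(k+1) := by
    intro k
    have h1 : (γ^(2*k+2))⁻¹ = r^(k+1) := by
      rw [show 2*k+2 = 2*(k+1) by ring, hrpow (k+1)]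
    rw [hηval k, h1, hθdef]
    ring
  -- suboptimal log-ratio decay
  have hxk : ∀ s a, a ∉ Astar Qs s → ∀ k, k ≥ k0 + 1 →
      lr k s a (bstar s) ≤ max (lr k0 s a (bstar s)) 0 - θ * r^k := by
    intro s a ha
    have hmaxle : ∀ m : ℕ, γ^(m+1) * lr k0 s a (bstar s) ≤ max (lr k0 s a (bstar s)) 0 := by
      intro m
      rcases le_or_gt (lr k0 s a (bstar s)) 0 with h | h
      · have : γ^(m+1) * lr k0 s a (bstar s) ≤ 0 :=
          mul_nonpos_of_nonneg_of_nonpos (by positivity) h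
        exact le_trans this (le_max_right _ _)
      · have h1 : γ^(m+1) ≤ 1 := pow_le_one₀ (le_of_lt hγ0) (le_of_lt hγ1)
        have : γ^(m+1) * lr k0 s a (bstar s) ≤ lr k0 s a (bstar s) := by nlinarith
        exact le_trans this (le_max_left _ _)
    have main : ∀ m : ℕ, lr (k0+1+m) s a (bstar s)
        ≤ γ^(m+1) * lr k0 s a (bstar s) - θ * r^(k0+1+m) := by
      intro m
      induction m with
      | zero =>
        have hrec := hlrrec k0 s a (bstar s)
        have hd := hD k0 (le_refl k0) s a ha
        have h2 : γ * η k0 * (Δ/2)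
            ≤ γ * η k0 * (Qf γ c P (V (π k0)) s a - Qf γ c P (V (π k0)) s (bstar s)) :=
          mul_le_mul_of_nonneg_left hd (le_of_lt (mul_pos hγ0 (hηpos k0)))
        rw [hγηθ k0] at h2
        have : k0 + 1 + 0 = k0 + 1 := rfl
        rw [this, hrec]
        have h3 : γ^(0+1) * lr k0 s a (bstar s) = γ * lr k0 s a (bstar s) := by ring
        rw [h3]
        linarith
      | succ m ih =>
        have hrec := hlrrec (k0+1+m) s a (bstar s)
        have hd := hD (k0+1+m) (by omega) s a ha
        have h2 : γ * η (k0+1+m) * (Δ/2)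
            ≤ γ * η (k0+1+m) * (Qf γ c P (V (π (k0+1+m))) s a
                - Qf γ c P (V (π (k0+1+m))) s (bstar s)) :=
          mul_le_mul_of_nonneg_left hd (le_of_lt (mul_pos hγ0 (hηpos _)))
        rw [hγηθ (k0+1+m)] at h2
        have hstep1 : k0+1+(m+1) = (k0+1+m)+1 := by ring
        rw [hstep1, hrec]
        have h4 : γ * lr (k0+1+m) s a (bstar s)
            ≤ γ * (γ^(m+1) * lr k0 s a (bstar s) - θ * r^(k0+1+m)) :=
          mul_le_mul_of_nonneg_left ih (le_of_lt hγ0)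
        have h5 : 0 ≤ γ * (θ * r^(k0+1+m)) := by positivity
        have h6 : γ * (γ^(m+1) * lr k0 s a (bstar s)) = γ^(m+1+1) * lr k0 s a (bstar s) := by
          ring
        have h7 : (k0+1+m)+1 = k0+1+(m+1) := by ring
        nlinarith [h2, h4]
    intro k hk
    have hm : k0 + 1 + (k - (k0+1)) = k := by omega
    have h1 := main (k - (k0+1))
    rw [hm] at h1
    have h2 := hmaxle (k - (k0+1))
    linarith
  -- uniform constant
  set Rm : ℝ := Finset.univ.sup' Finset.univ_nonempty
    (fun p : S × A => max (lr k0 p.1 p.2 (bstar p.1)) 0) with hRmdef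
  have hRm : ∀ s a, max (lr k0 s a (bstar s)) 0 ≤ Rm := fun s a => by
    simp only [hRmdef]
    exact Finset.le_sup' (fun p : S × A => max (lr k0 p.1 p.2 (bstar p.1)) 0)
      (Finset.mem_univ (s, a))
  have hE : ∀ s a, a ∉ Astar Qs s → ∀ k, k ≥ k0 + 1 →
      π k s a ≤ Real.exp (Rm - θ * r^k) := by
    intro s a ha k hk
    calc π k s a ≤ Real.exp (lr k s a (bstar s)) := hmass k s a (bstar s)
      _ ≤ Real.exp (Rm - θ * r^k) := by
          apply Real.exp_le_exp.mpr
          have h1 := hxk s a ha k hk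
          have h2 := hRm s a
          linarith
  -- superlinear decay of ε
  have hεsup : ∀ k, k ≥ k0 + 1 →
      ε k ≤ (2*B*((Fintype.card A : ℝ))/(1-γ)) * Real.exp (Rm - θ * r^k) := by
    intro k hk
    have hexp0 : (0:ℝ) < Real.exp (Rm - θ * r^k) := Real.exp_pos _
    have hVQ : ∀ s', V (π k) s' - V πstar s'
        ≤ (Fintype.card A:ℝ)*(2*B*Real.exp (Rm - θ*r^k)) + γ * ε k := by
      intro s'
      have hVk : V (π k) s' = ∑ a, π k s' a * Qf γ c P (V (π k)) s' a := hV _ (hpol k) s'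
      have hsplit : ∀ a, π k s' a * Qf γ c P (V (π k)) s' a
          = π k s' a * (Qs s' a - V πstar s')
            + π k s' a * (γ * ∑ s'', P s' a s'' * (V (π k) s'' - V πstar s''))
            + π k s' a * V πstar s' := by
        intro a
        have h2 := Qf_sub γ c P (V (π k)) (V πstar) s' a
        have h3 : Qf γ c P (V (π k)) s' a
            = Qs s' a + γ * ∑ s'', P s' a s'' * (V (π k) s'' - V πstar s'') := by
          rw [hQs]; linarith
        rw [h3]; ring
      have h3 : V (π k) s' = (∑ a, π k s' a * (Qs s' a - V πstar s'))
          + (∑ a, π k s' a * (γ * ∑ s'', P s' a s'' * (V (π k) s'' - V πstar s'')))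
          + V πstar s' := by
        rw [hVk, Finset.sum_congr rfl (fun a _ => hsplit a), Finset.sum_add_distrib,
          Finset.sum_add_distrib, ← Finset.sum_mul, ((hpol k) s').2, one_mul]
      have hterm2 : (∑ a, π k s' a * (γ * ∑ s'', P s' a s'' * (V (π k) s'' - V πstar s'')))
          ≤ γ * ε k := by
        apply sum_mul_le_of_dist ((hpol k) s')
        intro a
        have h4 := sum_mul_le_of_dist (hP s' a) (fun s'' => hεub k s'')
        exact mul_le_mul_of_nonneg_left h4 (le_of_lt hγ0)
      have hVst_ge : Qmin Qs s' ≤ V πstar s' := by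
        have h4 : V πstar s' = ∑ a, πstar s' a * Qs s' a := by
          rw [hQs]; exact hV πstar hπstar s'
        rw [h4]
        exact le_sum_mul_of_dist (hπstar s') (fun a => hQminle s' a)
      have hterm1 : (∑ a, π k s' a * (Qs s' a - V πstar s'))
          ≤ (Fintype.card A:ℝ)*(2*B*Real.exp (Rm - θ*r^k)) := by
        have hbound : ∀ a, π k s' a * (Qs s' a - V πstar s') ≤ 2*B*Real.exp (Rm - θ*r^k) := by
          intro a
          have hRHS0 : 0 ≤ 2*B*Real.exp (Rm - θ*r^k) := by positivity
          by_cases hA : a ∈ Astar Qs s'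
          · have hQa : Qs s' a = Qmin Qs s' := by
              rw [Astar, Finset.mem_filter] at hA; exact hA.2
            have h5 : π k s' a * (Qs s' a - V πstar s') ≤ 0 :=
              mul_nonpos_of_nonneg_of_nonpos (le_of_lt (hpos k s' a)) (by rw [hQa]; linarith)
            linarith
          · have h5 := hE s' a hA k hk
            have h6 : Qs s' a - V πstar s' ≤ 2*B := by
              have h7 := abs_le.mp (hQsb s' a)
              have h8 := abs_le.mp (hVsb s')
              linarith [h7.2, h8.1]
            rcases le_or_gt (Qs s' a - V πstar s') 0 with hd | hd
            · have h9 : π k s' a * (Qs s' a - V πstar s') ≤ 0 :=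
                mul_nonpos_of_nonneg_of_nonpos (le_of_lt (hpos k s' a)) hd
              linarith
            · calc π k s' a * (Qs s' a - V πstar s')
                  ≤ Real.exp (Rm - θ*r^k) * (2*B) :=
                    mul_le_mul h5 h6 (le_of_lt hd) (le_of_lt hexp0)
                _ = 2*B*Real.exp (Rm - θ*r^k) := by ring
        calc (∑ a, π k s' a * (Qs s' a - V πstar s'))
            ≤ ∑ _a : A, 2*B*Real.exp (Rm - θ*r^k) :=
              Finset.sum_le_sum (fun a _ => hbound a)
          _ = (Fintype.card A:ℝ)*(2*B*Real.exp (Rm - θ*r^k)) := by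
              rw [Finset.sum_const, nsmul_eq_mul, Finset.card_univ]
      linarith [h3, hterm1, hterm2]
    obtain ⟨s0, _, hs0⟩ := Finset.exists_mem_eq_sup' (Finset.univ_nonempty (α := S))
      (fun s => V (π k) s - V πstar s)
    have hεeq : ε k = V (π k) s0 - V πstar s0 := by
      simp only [hεdef]; rw [hs0]
    have h10 := hVQ s0
    rw [← hεeq] at h10
    rw [div_mul_eq_mul_div, le_div_iff₀ h1γ]
    nlinarith [h10]
  -- suboptimal exponential decay (to zero)
  have hsubdecay : Filter.Tendsto (fun k : ℕ => Real.exp (Rm - θ * r^k))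
      Filter.atTop (nhds 0) := by
    have h1 : Filter.Tendsto (fun k : ℕ => θ * r^k) Filter.atTop Filter.atTop :=
      (tendsto_pow_atTop_atTop_of_one_lt hr1).const_mul_atTop hθ0
    have h2 : Filter.Tendsto (fun k : ℕ => Rm - θ * r^k) Filter.atTop Filter.atBot := by
      apply Filter.tendsto_atBot_add_const_left _ Rm
      exact Filter.tendsto_neg_atTop_atBot.comp h1
    exact Real.tendsto_exp_atBot.comp h2
  -- optimal pairs: log-ratios tend to zero
  have hpair0 : ∀ s a b, a ∈ Astar Qs s → b ∈ Astar Qs s →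
      Filter.Tendsto (fun k => lr k s a b) Filter.atTop (nhds 0) := by
    intro s a b haA hbA
    have hQab : Qs s a = Qs s b := by
      rw [Astar, Finset.mem_filter] at haA hbA
      rw [haA.2, hbA.2]
    apply tendsto_zero_of_geo_rec γ (le_of_lt hγ0) hγ1 _
      (fun k => 2*γ^2*(γ^(2*k+2))⁻¹ * ε k)
    · intro k
      rw [hlrrec k s a b]
      have hDb : |Qf γ c P (V (π k)) s a - Qf γ c P (V (π k)) s b| ≤ 2*(γ * ε k) := by
        have h1 := hQd k s a
        have h2 := hQd k s b
        have h3 : Qf γ c P (V (π k)) s a - Qf γ c P (V (π k)) s b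
            = (Qf γ c P (V (π k)) s a - Qs s a) - (Qf γ c P (V (π k)) s b - Qs s b) := by
          rw [hQab]; ring
        rw [h3]
        calc |(Qf γ c P (V (π k)) s a - Qs s a) - (Qf γ c P (V (π k)) s b - Qs s b)|
            ≤ |Qf γ c P (V (π k)) s a - Qs s a| + |Qf γ c P (V (π k)) s b - Qs s b| :=
              abs_sub _ _
          _ ≤ 2*(γ * ε k) := by linarith
      have hηk := hηpos k
      calc |γ * lr k s a b - γ * η k * (Qf γ c P (V (π k)) s a - Qf γ c P (V (π k)) s b)|
          ≤ |γ * lr k s a b|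
            + |γ * η k * (Qf γ c P (V (π k)) s a - Qf γ c P (V (π k)) s b)| := abs_sub _ _
        _ = γ * |lr k s a b|
            + γ * η k * |Qf γ c P (V (π k)) s a - Qf γ c P (V (π k)) s b| := by
            rw [abs_mul, abs_mul, abs_of_pos hγ0, abs_of_pos (mul_pos hγ0 hηk)]
        _ ≤ γ * |lr k s a b| + 2*γ^2*(γ^(2*k+2))⁻¹ * ε k := by
            have h4 : γ * η k * |Qf γ c P (V (π k)) s a - Qf γ c P (V (π k)) s b|
                ≤ γ * η k * (2*(γ * ε k)) :=
              mul_le_mul_of_nonneg_left hDb (le_of_lt (mul_pos hγ0 hηk))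
            have h5 : γ * η k * (2*(γ * ε k)) = 2*γ^2*(γ^(2*k+2))⁻¹ * ε k := by
              rw [hηval k]; ring
            linarith [h4, h5.symm.le, h5.le]
    · intro k
      have : (0:ℝ) < (γ^(2*k+2))⁻¹ := by positivity
      have := hε0 k
      positivity
    · -- the perturbation tends to zero
      have hval : ∀ k : ℕ, 2*γ^2*(γ^(2*k+2))⁻¹ * ε k = 2 * r^k * ε k := by
        intro k
        have h1 : (γ^(2*k+2))⁻¹ = r^(k+1) := by
          rw [show 2*k+2 = 2*(k+1) by ring, hrpow (k+1)]
        rw [h1, hrdef, pow_succ]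
        field_simp
        have hg2 : γ ^ 2 * γ⁻¹ ^ 2 = 1 := by rw [← mul_pow, mul_inv_cancel₀ hγ', one_pow]
        ring_nf
        rw [hg2, one_mul]
      set M : ℝ := 2*B*((Fintype.card A : ℝ))/(1-γ) with hMdef
      have hM0 : 0 ≤ M := by rw [hMdef]; positivity
      have hg : Filter.Tendsto
          (fun k : ℕ => (2*M*Real.exp Rm/θ) * ((θ*r^k) * Real.exp (-(θ*r^k))))
          Filter.atTop (nhds 0) := by
        have h1 : Filter.Tendsto (fun k : ℕ => θ * r^k) Filter.atTop Filter.atTop :=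
          (tendsto_pow_atTop_atTop_of_one_lt hr1).const_mul_atTop hθ0
        have h2 := (Real.tendsto_pow_mul_exp_neg_atTop_nhds_zero 1).comp h1
        have h3 : Filter.Tendsto (fun k : ℕ => (θ*r^k) * Real.exp (-(θ*r^k)))
            Filter.atTop (nhds 0) := by
          apply h2.congr
          intro k
          simp [Function.comp, pow_one]
        have h4 := h3.const_mul (2*M*Real.exp Rm/θ)
        simpa using h4
      apply tendsto_of_tendsto_of_tendsto_of_le_of_le' tendsto_const_nhds hg
      · apply Filter.Eventually.of_forall
        intro k
        have h6 : (0:ℝ) < (γ^(2*k+2))⁻¹ := by positivity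
        have h7 := hε0 k
        positivity
      · rw [Filter.eventually_atTop]
        refine ⟨k0+1, fun k hk => ?_⟩
        rw [hval k]
        have h8 := hεsup k hk
        have h9 : (0:ℝ) < r^k := pow_pos hr0 k
        have h10 : 2 * r^k * ε k ≤ 2 * r^k * (M * Real.exp (Rm - θ*r^k)) := by
          apply mul_le_mul_of_nonneg_left _ (by positivity)
          rw [hMdef]
          rw [hMdef] at h8
          exact h8
        have h11 : 2 * r^k * (M * Real.exp (Rm - θ*r^k))
            = (2*M*Real.exp Rm/θ) * ((θ*r^k) * Real.exp (-(θ*r^k))) := by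
          rw [show Rm - θ*r^k = Rm + (-(θ*r^k)) by ring, Real.exp_add]
          field_simp
        linarith
  -- conclusion
  intro s a
  by_cases ha : a ∈ Astar Qs s
  · have hAsne : (Astar Qs s).Nonempty := ⟨bstar s, hbmem s⟩
    have hcardAs : (0:ℝ) < ((Astar Qs s).card : ℝ) := by
      exact_mod_cast Finset.card_pos.mpr hAsne
    have hinv : ∀ k, π k s a = (∑ b, Real.exp (lr k s b a))⁻¹ := by
      intro k
      have h1 : (∑ b, Real.exp (lr k s b a)) = (π k s a)⁻¹ := by
        rw [Finset.sum_congr rfl (fun b _ => hexp k s b a), ← Finset.sum_div,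
          ((hpol k) s).2]
        rw [one_div]
      rw [h1, inv_inv]
    have hlim : Filter.Tendsto (fun k => ∑ b, Real.exp (lr k s b a)) Filter.atTop
        (nhds ((Astar Qs s).card : ℝ)) := by
      have hsum : ((Astar Qs s).card : ℝ) = ∑ b, (if b ∈ Astar Qs s then (1:ℝ) else 0) := by
        rw [Finset.sum_ite_mem, Finset.univ_inter, Finset.sum_const, nsmul_eq_mul, mul_one]
      rw [hsum]
      apply tendsto_finset_sum
      intro b _
      by_cases hb : b ∈ Astar Qs s
      · rw [if_pos hb]
        have h1 := hpair0 s b a hb ha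
        have h2 := (Real.continuous_exp.tendsto 0).comp h1
        simpa [Function.comp_def] using h2
      · rw [if_neg hb]
        have hsplit : ∀ k, Real.exp (lr k s b a)
            = Real.exp (lr k s b (bstar s)) * Real.exp (lr k s (bstar s) a) := by
          intro k
          rw [← Real.exp_add]
          congr 1
          simp only [hlrdef]
          ring
        have hf1 : Filter.Tendsto (fun k => Real.exp (lr k s b (bstar s)))
            Filter.atTop (nhds 0) := by
          apply tendsto_of_tendsto_of_tendsto_of_le_of_le' tendsto_const_nhds hsubdecay
          · exact Filter.Eventually.of_forall (fun k => (Real.exp_pos _).le)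
          · rw [Filter.eventually_atTop]
            refine ⟨k0+1, fun k hk => Real.exp_le_exp.mpr ?_⟩
            have h1 := hxk s b hb k hk
            have h2 := hRm s b
            linarith
        have hf2 : Filter.Tendsto (fun k => Real.exp (lr k s (bstar s) a))
            Filter.atTop (nhds 1) := by
          have h1 := hpair0 s (bstar s) a (hbmem s) ha
          have h2 := (Real.continuous_exp.tendsto 0).comp h1
          simpa [Function.comp_def] using h2
        have h3 := hf1.mul hf2
        rw [zero_mul] at h3
        apply h3.congr
        intro k
        rw [hsplit k]
    have hpiU : piU Qs s a = ((Astar Qs s).card : ℝ)⁻¹ := by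
      rw [piU, if_pos ha, one_div]
    rw [hpiU]
    have hfinal := hlim.inv₀ (ne_of_gt hcardAs)
    apply hfinal.congr
    intro k
    exact (hinv k).symm
  · have hpiU : piU Qs s a = 0 := by
      rw [piU, if_neg ha]
    rw [hpiU]
    apply tendsto_of_tendsto_of_tendsto_of_le_of_le' tendsto_const_nhds hsubdecay
    · exact Filter.Eventually.of_forall (fun k => (hpos k s a).le)
    · rw [Filter.eventually_atTop]
      exact ⟨k0+1, fun k hk => hE s a ha k hk⟩
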